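/- In the FMC, the encoded law for update–update interaction holds by β-reduction: the term c<_>.[M]c.c<_>.[N]c.P β-reduces in one step to c<_>.[N]c.P (i.e. c:=M; c:=N; P reduces to c:=N; P), where _ denotes a variable not free in M, N, or P; and the encoded law for update–lookup holds: c<_>.[M]c.c<x>.[x]c.x.P β-reduces in one step to c<_>.[M]c.M;(x.P with M substituted for x), i.e. c:=M; !c-followed-by-P reduces to c:=M followed by {M/x}(x.P). -/
import Mathlib


/-- Terms of the Functional Machine Calculus over a set `A` of locations,
in de Bruijn representation (so terms are automatically identified up to
α-equivalence): nil, variable prefix, push/application on a location,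
and pop/abstraction on a location. -/
inductive Tm (A : Type) : Type
  | star : Tm A
  | var  : Nat → Tm A → Tm A
  | push : Tm A → A → Tm A → Tm A
  | pop  : A → Tm A → Tm A

namespace Tm

variable {A : Type}

/-- Lifting of a renaming under a binder. -/
def liftF (f : Nat → Nat) : Nat → Nat
  | 0 => 0
  | n+1 => f n + 1

/-- Renaming of de Bruijn indices. -/
def rename (f : Nat → Nat) : Tm A → Tm A
  | star => star
  | var n M => var (f n) (rename f M)
  | push N a M => push (rename f N) a (rename f M)
  | pop a M => pop a (rename (liftF f) M)

/-- Capture-avoiding composition `N ; M`. -/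
def comp : Tm A → Tm A → Tm A
  | star, P => P
  | var n N, P => var n (comp N P)
  | push Q a N, P => push Q a (comp N P)
  | pop a N, P => pop a (comp N (rename Nat.succ P))

/-- Lifting of a substitution under a binder. -/
def liftS (σ : Nat → Tm A) : Nat → Tm A
  | 0 => var 0 star
  | n+1 => rename Nat.succ (σ n)

/-- Capture-avoiding simultaneous substitution; note
`{N/x}(x.M) = N ; {N/x}M`. -/
def subst (σ : Nat → Tm A) : Tm A → Tm A
  | star => star
  | var n M => comp (σ n) (subst σ M)
  | push N a M => push (subst σ N) a (subst σ M)
  | pop a M => pop a (subst (liftS σ) M)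

/-- Capture-avoiding substitution `{N/x}M` of `N` for the variable
bound immediately outside `M`. -/
def subst1 (N : Tm A) : Tm A → Tm A :=
  subst (fun n => match n with | 0 => N | n+1 => var n star)

end Tm

/-- Head contexts `H ::= {} | [M]a.H | a<x>.H`. -/
inductive Hd (A : Type) : Type
  | hole : Hd A
  | push : Tm A → A → Hd A → Hd A
  | pop  : A → Hd A → Hd A

namespace Hd

variable {A : Type}

/-- Plugging a term into the hole of a head context (binders of `H` capture). -/
def plug : Hd A → Tm A → Tm A
  | hole, M => M
  | push N a H, M => Tm.push N a (plug H M)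
  | pop a H, M => Tm.pop a (plug H M)

/-- The number of binders of a head context. -/
def binders : Hd A → Nat
  | hole => 0
  | push _ _ H => binders H
  | pop _ H => binders H + 1

/-- The locations occurring along the spine of a head context. -/
def locs : Hd A → List A
  | hole => []
  | push _ a H => a :: locs H
  | pop a H => a :: locs H

end Hd

/-- β-reduction of the FMC: `[N]a.H.a<x>.M → H.{N/x}M` where the location `a`
does not occur in `H` (in de Bruijn style no binding variable of `H` can
capture in `N`, which is shifted by the number of binders of `H`),
closed under all contexts. -/
inductive Step {A : Type} : Tm A → Tm A → Prop
  | beta (N : Tm A) (a : A) (H : Hd A) (M : Tm A) (h : a ∉ H.locs) :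
      Step (Tm.push N a (H.plug (Tm.pop a M)))
           (H.plug (Tm.subst1 (Tm.rename (· + H.binders) N) M))
  | var {M M' : Tm A} (n : Nat) : Step M M' → Step (Tm.var n M) (Tm.var n M')
  | pushL {M M' : Tm A} (N : Tm A) (a : A) : Step M M' → Step (Tm.push N a M) (Tm.push N a M')
  | pushArg {N N' : Tm A} (a : A) (M : Tm A) : Step N N' → Step (Tm.push N a M) (Tm.push N' a M)
  | pop {M M' : Tm A} (a : A) : Step M M' → Step (Tm.pop a M) (Tm.pop a M')

namespace Tm

variable {A : Type}

theorem rename_ext {f g : Nat → Nat} (h : ∀ n, f n = g n) :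
    ∀ M : Tm A, rename f M = rename g M := by
  intro M
  induction M generalizing f g with
  | star => rfl
  | var n M ih => simp [rename, h, ih h]
  | push N a M ihN ihM => simp [rename, ihN h, ihM h]
  | pop a M ih =>
      simp [rename]
      exact ih (fun n => by cases n <;> simp [liftF, h])

theorem rename_id {f : Nat → Nat} (h : ∀ n, f n = n) :
    ∀ M : Tm A, rename f M = M := by
  intro M
  induction M generalizing f with
  | star => rfl
  | var n M ih => simp [rename, h, ih h]
  | push N a M ihN ihM => simp [rename, ihN h, ihM h]
  | pop a M ih =>
      simp [rename]
      exact ih (fun n => by cases n <;> simp [liftF, h])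

theorem subst_ext {σ τ : Nat → Tm A} (h : ∀ n, σ n = τ n) :
    ∀ M : Tm A, subst σ M = subst τ M := by
  intro M
  induction M generalizing σ τ with
  | star => rfl
  | var n M ih => simp [subst, h, ih h]
  | push N a M ihN ihM => simp [subst, ihN h, ihM h]
  | pop a M ih =>
      simp [subst]
      exact ih (fun n => by cases n <;> simp [liftS, h])

theorem subst_rename (σ : Nat → Tm A) (f : Nat → Nat) :
    ∀ M : Tm A, subst σ (rename f M) = subst (fun n => σ (f n)) M := by
  intro M
  induction M generalizing σ f with
  | star => rfl
  | var n M ih => simp [rename, subst, ih]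
  | push N a M ihN ihM => simp [rename, subst, ihN, ihM]
  | pop a M ih =>
      simp [rename, subst, ih]
      exact subst_ext (fun n => by cases n <;> simp [liftS, liftF]) M

theorem subst_idv {σ : Nat → Tm A} (h : ∀ n, σ n = var n star) :
    ∀ M : Tm A, subst σ M = M := by
  intro M
  induction M generalizing σ with
  | star => rfl
  | var n M ih => simp [subst, h, ih h, comp]
  | push N a M ihN ihM => simp [subst, ihN h, ihM h]
  | pop a M ih =>
      simp [subst]
      exact ih (fun n => by cases n <;> simp [liftS, h, rename])

theorem subst1_rename (N M : Tm A) : subst1 N (rename Nat.succ M) = M := by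
  unfold subst1
  rw [subst_rename]
  exact subst_idv (fun n => rfl) M

theorem comp_star : ∀ M : Tm A, comp M star = M := by
  intro M
  induction M with
  | star => rfl
  | var n M ih => simp [comp, ih]
  | push N a M ihN ihM => simp [comp, ihM]
  | pop a M ih => simp [comp, rename, ih]

theorem subst1_star (Q : Tm A) : subst1 Q star = star := rfl

theorem subst1_push (Q N : Tm A) (a : A) (M : Tm A) :
    subst1 Q (push N a M) = push (subst1 Q N) a (subst1 Q M) := rfl

theorem subst1_var0 (Q M : Tm A) :
    subst1 Q (var 0 M) = comp Q (subst1 Q M) := rfl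

theorem rename_add_zero (M : Tm A) : rename (· + 0) M = M :=
  rename_id (fun _ => rfl) M

end Tm

/-- The encoded algebraic laws for state in the FMC, arising from single
β-steps.  With update `c:=N; M` encoded as `c<_>.[N]c.M` (the fresh
variable `_` being a vacuous de Bruijn binder, under which terms are
shifted) and lookup `!c` as `c<x>.[x]c.x`:
update–update, `c<_>.[M]c.c<_>.[N]c.P → c<_>.[N]c.P`
(i.e. `c:=M; c:=N; P  →  c:=N; P`), and
update–lookup, `c<_>.[M]c.c<x>.[x]c.x.P → c<_>.[M]c.{M/x}(x.P)`
(i.e. `c:=M; !c`-followed-by-`P` reduces to `c:=M` followed by `M;P`),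
where `_` and `x` are not free in `M`, `N`, `P`. -/
theorem fmc_state_laws {A : Type} (c : A) (M N P : Tm A) :
    Step (Tm.pop c (Tm.push (M.rename Nat.succ) c
            (Tm.pop c (Tm.push ((N.rename Nat.succ).rename Nat.succ) c
              ((P.rename Nat.succ).rename Nat.succ)))))
         (Tm.pop c (Tm.push (N.rename Nat.succ) c (P.rename Nat.succ))) ∧
    Step (Tm.pop c (Tm.push (M.rename Nat.succ) c
            (Tm.pop c (Tm.push (Tm.var 0 Tm.star) c
              (Tm.var 0 ((P.rename Nat.succ).rename Nat.succ))))))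
         (Tm.pop c (Tm.push (M.rename Nat.succ) c
            ((M.rename Nat.succ).comp (P.rename Nat.succ)))) := by
  constructor
  · apply Step.pop
    have h1 := Step.beta (M.rename Nat.succ) c Hd.hole
      (Tm.push ((N.rename Nat.succ).rename Nat.succ) c
        ((P.rename Nat.succ).rename Nat.succ)) (by simp [Hd.locs])
    simp only [Hd.plug, Hd.binders, Tm.subst1_push, Tm.rename_add_zero,
      Tm.subst1_rename] at h1
    exact h1
  · apply Step.pop
    have h1 := Step.beta (M.rename Nat.succ) c Hd.hole
      (Tm.push (Tm.var 0 Tm.star) c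
        (Tm.var 0 ((P.rename Nat.succ).rename Nat.succ))) (by simp [Hd.locs])
    simp only [Hd.plug, Hd.binders, Tm.subst1_push, Tm.subst1_var0,
      Tm.rename_add_zero, Tm.subst1_rename, Tm.subst1_star, Tm.comp_star] at h1
    exact h1
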